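/- Let k be a field, a ∈ k[[x,y]] nonzero with order d, and suppose a = x^ℓ·(g(y) + x·Ω(x,y)) where g ∈ k[y] is nonzero of order M = ord_0(g) (the minimal exponent with nonzero coefficient) and Ω ∈ k[[x,y]]. Then the polynomial obtained by substituting X = 1 in the initial form In(a) = Σ_{i+j=d} λ_{i,j} X^i Y^j, namely g̃(Y) = Σ_{i+j=d} λ_{i,j} Y^j, has degree at most M. -/

import Mathlib

open MvPowerSeries

/-! Divisibility by `x^ℓ` forces every monomial of `a` to have `x`-degree at least `ℓ`, while the
coefficient of `x^ℓ y^M` in `a` is the nonzero coefficient of `y^M` in `G`, so `d ≤ ℓ + M`.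
A monomial `x^i y^j` of degree `d` in `a` thus has `j = d - i ≤ (ℓ + M) - ℓ = M`. -/

namespace MvPowerSeries

variable {σ R : Type*} [Semiring R]

theorem le_of_X_pow_dvd_of_coeff_ne_zero {s : σ} {n : ℕ} {φ : MvPowerSeries σ R}
    (hdvd : X s ^ n ∣ φ) {m : σ →₀ ℕ} (hm : coeff m φ ≠ 0) : n ≤ m s :=
  not_lt.mp fun hlt => hm (X_pow_dvd_iff.mp hdvd m hlt)

theorem coeff_single_add_X_pow_mul (s : σ) (n : ℕ) (m : σ →₀ ℕ) (φ : MvPowerSeries σ R) :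
    coeff (Finsupp.single s n + m) (X s ^ n * φ) = coeff m φ := by
  rw [X_pow_eq, coeff_add_monomial_mul, one_mul]

theorem coeff_X_mul_of_apply_eq_zero {s : σ} {m : σ →₀ ℕ} (hm : m s = 0)
    (φ : MvPowerSeries σ R) : coeff m (X s * φ) = 0 :=
  X_dvd_iff.mp (dvd_mul_right _ _) m hm

end MvPowerSeries

theorem stmt_7_general {k : Type*} [Field k] (a G Ω : MvPowerSeries (Fin 2) k)
    (ℓ M d : ℕ)
    -- `G` has order `M` in `y`:
    (hGM : MvPowerSeries.coeff (Finsupp.single 1 M) G ≠ 0)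
    -- the factorization `a = x^ℓ (G + x Ω)`:
    (hfac : a = (MvPowerSeries.X 0) ^ ℓ * (G + MvPowerSeries.X 0 * Ω))
    -- `d` is the order of `a` (minimal total degree):
    (hd_le : ∀ m : Fin 2 →₀ ℕ, MvPowerSeries.coeff m a ≠ 0 → d ≤ m 0 + m 1) :
    ∀ m : Fin 2 →₀ ℕ, MvPowerSeries.coeff m a ≠ 0 → m 0 + m 1 = d → m 1 ≤ M := by
  intro m hm hmd
  have hℓ : ℓ ≤ m 0 :=
    le_of_X_pow_dvd_of_coeff_ne_zero (hfac ▸ dvd_mul_right _ _) hm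
  have hcorner : coeff (Finsupp.single 0 ℓ + Finsupp.single 1 M) a ≠ 0 := by
    rwa [hfac, coeff_single_add_X_pow_mul, map_add,
      coeff_X_mul_of_apply_eq_zero (by simp), add_zero]
  have hdM : d ≤ ℓ + M := by simpa using hd_le _ hcorner
  omega

/-- Let `a = x^ℓ (g(y) + x Ω) ∈ k[[x,y]]` be nonzero of order `d`, where `g` is a nonzero
series in `y` alone of order `M`.  Then the dehomogenization at `X = 1` of the initial form of
`a` has degree at most `M`; i.e. every monomial `x^i y^j` with `i + j = d` appearing in `a`
satisfies `j ≤ M`. -/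
theorem stmt_7 {k : Type*} [Field k] (a G Ω : MvPowerSeries (Fin 2) k)
    (ℓ M d : ℕ)
    (ha : a ≠ 0)
    -- `G` is a series in the variable `y` alone:
    (hGy : ∀ m : Fin 2 →₀ ℕ, MvPowerSeries.coeff m G ≠ 0 → m 0 = 0)
    -- `G` has order `M` in `y`:
    (hGM : MvPowerSeries.coeff (Finsupp.single 1 M) G ≠ 0)
    (hGlt : ∀ j < M, MvPowerSeries.coeff (Finsupp.single 1 j) G = 0)
    -- the factorization `a = x^ℓ (G + x Ω)`:
    (hfac : a = (MvPowerSeries.X 0) ^ ℓ * (G + MvPowerSeries.X 0 * Ω))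
    -- `d` is the order of `a` (minimal total degree):
    (hd_le : ∀ m : Fin 2 →₀ ℕ, MvPowerSeries.coeff m a ≠ 0 → d ≤ m 0 + m 1)
    (hd_ex : ∃ m : Fin 2 →₀ ℕ, MvPowerSeries.coeff m a ≠ 0 ∧ m 0 + m 1 = d) :
    ∀ m : Fin 2 →₀ ℕ, MvPowerSeries.coeff m a ≠ 0 → m 0 + m 1 = d → m 1 ≤ M :=
  stmt_7_general a G Ω ℓ M d hGM hfac hd_le
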